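/- Fix n ≥ 1 and consider pairs (f₀, f₁) of maps f₀, f₁ : ℝⁿ → ℝ^{n+1} (components indexed 0, 1, …, n) with f₀ C¹ and f₀⁰ = 0; write F₀ := (f₀¹, …, f₀ⁿ) : ℝⁿ → ℝⁿ. Define (f̃₀, f̃₁) ⋆ (f₀, f₁) := ( f̃₀ + f₀∘(id + F̃₀), f̃₁ + (1 + f̃₁⁰)·f₁∘(id + F̃₀) + Σ_{i=1}^{n} f̃₁ⁱ·(∂_i f₀)∘(id + F̃₀) ). Then: (i) if sup_{x∈ℝⁿ} of the operator norm of the n×n matrix (∂_i f₀ʲ(x))_{1≤i,j≤n} is < 1, then for every f₁ there is a unique g₁ : ℝⁿ → ℝ^{n+1} with (f₀, f₁) = (0, g₁) ⋆ (f₀, 0); explicitly g₁⁰ = f₁⁰ and the spatial components solve g₁ʲ + Σᵢ g₁ⁱ ∂_i f₀ʲ = f₁ʲ pointwise; (ii) if id + F₀ is a bijection of ℝⁿ, then for every f₁ there is a unique g₁ with (f₀, f₁) = (f₀, 0) ⋆ (0, g₁), namely g₁ = f₁∘(id + F₀)^{−1}. Hence every pair (f₀, f₁) factors both as an element of the subgroup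 generated by pairs (0, ·) followed by one generated by pairs (·, 0) and in the reverse order (Lemma 3.3: 𝒢 = 𝒢₁ ⋆ 𝒢₀ = 𝒢₀ ⋆ 𝒢₁). -/

import Mathlib

noncomputable section

/-- First-order Cauchy data: a map from `ℝⁿ` to `ℝ^{n+1}` (components indexed `0,…,n`). -/
abbrev Dat (n : ℕ) := (Fin n → ℝ) → (Fin (n + 1) → ℝ)

/-- Partial derivative `∂_i` of `f : ℝⁿ → ℝ^{n+1}`. -/
def pdd {n : ℕ} (i : Fin n) (f : Dat n) (x : Fin n → ℝ) : Fin (n + 1) → ℝ :=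
  fderiv ℝ f x (Pi.single i 1)

/-- The spatial components `F₀ = (f₀¹, …, f₀ⁿ)`. -/
def spat {n : ℕ} (f : Dat n) (x : Fin n → ℝ) : Fin n → ℝ := fun i => f x i.succ

/-- The group operation `(f̃₀, f̃₁) ⋆ (f₀, f₁)` on pairs of Cauchy data. -/
def starOp {n : ℕ} (p q : Dat n × Dat n) : Dat n × Dat n :=
  (fun x => p.1 x + q.1 (x + spat p.1 x),
   fun x => p.2 x + (1 + p.2 x 0) • q.2 (x + spat p.1 x)
     + ∑ i : Fin n, p.2 x i.succ • pdd i q.1 (x + spat p.1 x))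

/-! With `f̃₀ = 0` the spatial shift in `⋆` disappears, so `(0, g₁) ⋆ (f₀, 0) = (f₀, f₁)` says that
at every point `g₁ x` solves a linear system. As `f₀⁰ = 0`, also `∂ᵢ f₀⁰ = 0`, so the system fixes
`g₁⁰` and acts on the spatial part by `v ↦ v (1 + J)`, where `J = (∂ᵢ f₀ʲ)`; a Neumann series makes
`1 + J` invertible once `‖J‖ < 1`. In the other order the equation reads `g₁ ∘ (id + F₀) = f₁`,
whose only solution is `f₁ ∘ (id + F₀)⁻¹`. -/

open Matrix

lemma fderiv_apply_eq_zero_of_forall_apply_eq_zero {𝕜 E ι : Type*} [NontriviallyNormedField 𝕜]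
    [NormedAddCommGroup E] [NormedSpace 𝕜 E] [Fintype ι] {F : ι → Type*}
    [∀ i, NormedAddCommGroup (F i)] [∀ i, NormedSpace 𝕜 (F i)] {f : E → ∀ i, F i} {k : ι}
    (hk : ∀ x, f x k = 0) (x v : E) : fderiv 𝕜 f x v k = 0 := by
  by_cases hf : DifferentiableAt 𝕜 f x
  · have h := fderiv_apply hf k
    rw [show (fun y => f y k) = fun _ => 0 from funext hk, fderiv_const_apply] at h
    exact (DFunLike.congr_fun h v).symm
  · simp [fderiv_zero_of_not_differentiableAt hf]

lemma pdd_apply_zero {n : ℕ} {f : Dat n} (hf : ∀ x, f x 0 = 0) (i : Fin n) (x : Fin n → ℝ) :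
    pdd i f x 0 = 0 :=
  fderiv_apply_eq_zero_of_forall_apply_eq_zero hf x _

namespace Matrix

variable {ι : Type*} [Fintype ι] [DecidableEq ι]

lemma isUnit_one_add_of_norm_toLin'_lt_one {𝕜 : Type*} [NontriviallyNormedField 𝕜]
    [CompleteSpace 𝕜] {M : Matrix ι ι 𝕜}
    (hM : ‖LinearMap.toContinuousLinearMap (toLin' M)‖ < 1) : IsUnit (1 + M) := by
  set T := LinearMap.toContinuousLinearMap (toLin' M)
  have hT : IsUnit (1 + T) := by
    simpa using isUnit_one_sub_of_norm_lt_one (x := -T) (by rwa [norm_neg])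
  rw [← isUnit_map_iff (toLinAlgEquiv' (R := 𝕜)), map_add, map_one]
  exact hT.map ContinuousLinearMap.toLinearMapRingHom

lemma vecMul_one_add_apply {α : Type*} [NonAssocSemiring α] (M : Matrix ι ι α) (v : ι → α)
    (j : ι) : (v ᵥ* (1 + M)) j = v j + ∑ i, v i * M i j := by
  rw [vecMul_add, vecMul_one]
  rfl

end Matrix

section LinearSystem

variable {n : ℕ} (D : Fin n → Fin (n + 1) → ℝ)

lemma add_sum_smul_eq_cons (hD : ∀ i, D i 0 = 0) (w : Fin (n + 1) → ℝ) :
    w + ∑ i, w i.succ • D i =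
      Fin.cons (w 0) (Fin.tail w ᵥ* (1 + of fun i (j : Fin n) => D i j.succ)) := by
  ext k
  refine Fin.cases ?_ (fun j => ?_) k
  · simp [hD]
  · simp [vecMul_one_add_apply, Fin.tail, mul_comm]

lemma bijective_add_sum_smul (hD : ∀ i, D i 0 = 0)
    (hA : IsUnit (1 + of fun i (j : Fin n) => D i j.succ)) :
    Function.Bijective fun w : Fin (n + 1) → ℝ => w + ∑ i, w i.succ • D i := by
  have h : (fun w : Fin (n + 1) → ℝ => w + ∑ i, w i.succ • D i) =
      Fin.consEquiv _ ∘ Prod.map id (· ᵥ* (1 + of fun i (j : Fin n) => D i j.succ)) ∘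
        (Fin.consEquiv _).symm := by
    funext w
    rw [add_sum_smul_eq_cons D hD]
    rfl
  rw [h]
  exact (Fin.consEquiv _).bijective.comp
    ((Function.bijective_id.prodMap
      ⟨vecMul_injective_of_isUnit hA, vecMul_surjective_iff_isUnit.2 hA⟩).comp
      (Fin.consEquiv _).symm.bijective)

end LinearSystem

lemma Function.Bijective.comp_eq_iff_eq_comp_invFun {α β γ : Type*} [Nonempty α] {φ : α → β}
    (hφ : Function.Bijective φ) {g : β → γ} {f : α → γ} :
    g ∘ φ = f ↔ g = f ∘ Function.invFun φ := by
  constructor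
  · rintro rfl
    funext y
    simp [Function.rightInverse_invFun hφ.2 y]
  · rintro rfl
    funext x
    simp [Function.leftInverse_invFun hφ.1 x]

section StarOp

variable {n : ℕ} (f g : Dat n)

lemma starOp_zero_mk_mk_zero :
    starOp (0, g) (f, 0) = (f, fun x => g x + ∑ i, g x i.succ • pdd i f x) := by
  have h : ∀ x, spat (0 : Dat n) x = 0 := fun _ => rfl
  simp [starOp, h]

lemma starOp_mk_zero_zero_mk : starOp (f, 0) (0, g) = (f, fun x => g (x + spat f x)) := by
  simp [starOp]

end StarOp

theorem stmt18_general (n : ℕ) (f₀ : Dat n)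
    (hf₀0 : ∀ x, f₀ x 0 = 0) :
    ((∃ c < (1 : ℝ), ∀ x : Fin n → ℝ,
        ‖LinearMap.toContinuousLinearMap
            (Matrix.toLin' (Matrix.of fun i j : Fin n => pdd i f₀ x j.succ))‖ ≤ c) →
      ∀ f₁ : Dat n,
        (∃! g₁ : Dat n, starOp ((0 : Dat n), g₁) (f₀, (0 : Dat n)) = (f₀, f₁)) ∧
        (∀ g₁ : Dat n, starOp ((0 : Dat n), g₁) (f₀, (0 : Dat n)) = (f₀, f₁) →
          ∀ x : Fin n → ℝ, g₁ x 0 = f₁ x 0 ∧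
            ∀ j : Fin n,
              g₁ x j.succ + ∑ i : Fin n, g₁ x i.succ * pdd i f₀ x j.succ = f₁ x j.succ)) ∧
    (Function.Bijective (fun x : Fin n → ℝ => x + spat f₀ x) →
      ∀ f₁ : Dat n,
        starOp (f₀, (0 : Dat n))
            ((0 : Dat n), fun x => f₁ (Function.invFun (fun y : Fin n → ℝ => y + spat f₀ y) x))
          = (f₀, f₁) ∧
        (∀ g₁ : Dat n, starOp (f₀, (0 : Dat n)) ((0 : Dat n), g₁) = (f₀, f₁) →
          g₁ = fun x => f₁ (Function.invFun (fun y : Fin n → ℝ => y + spat f₀ y) x))) := by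
  have hD : ∀ x i, pdd i f₀ x 0 = 0 := fun x i => pdd_apply_zero hf₀0 i x
  refine ⟨fun ⟨c, hc, hb⟩ f₁ => ?_, fun hφ f₁ => ?_⟩
  · simp only [starOp_zero_mk_mk_zero, Prod.mk.injEq, true_and]
    have hL : ∀ x, Function.Bijective fun w => w + ∑ i, w i.succ • pdd i f₀ x := fun x =>
      bijective_add_sum_smul _ (hD x) (isUnit_one_add_of_norm_toLin'_lt_one ((hb x).trans_lt hc))
    refine ⟨(Function.Bijective.piMap hL).existsUnique f₁, fun g hg x => ?_⟩
    have hgx := congrFun hg x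
    rw [add_sum_smul_eq_cons _ (hD x)] at hgx
    refine ⟨by simpa using congrFun hgx 0, fun j => ?_⟩
    simpa [vecMul_one_add_apply, Fin.tail] using congrFun hgx j.succ
  · simp only [starOp_mk_zero_zero_mk, Prod.mk.injEq, true_and]
    exact ⟨hφ.comp_eq_iff_eq_comp_invFun.2 rfl, fun g => hφ.comp_eq_iff_eq_comp_invFun.1⟩

theorem stmt18 (n : ℕ) (hn : 1 ≤ n) (f₀ : Dat n)
    (hf₀ : ContDiff ℝ 1 f₀) (hf₀0 : ∀ x, f₀ x 0 = 0) :
    ((∃ c < (1 : ℝ), ∀ x : Fin n → ℝ,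
        ‖LinearMap.toContinuousLinearMap
            (Matrix.toLin' (Matrix.of fun i j : Fin n => pdd i f₀ x j.succ))‖ ≤ c) →
      ∀ f₁ : Dat n,
        (∃! g₁ : Dat n, starOp ((0 : Dat n), g₁) (f₀, (0 : Dat n)) = (f₀, f₁)) ∧
        (∀ g₁ : Dat n, starOp ((0 : Dat n), g₁) (f₀, (0 : Dat n)) = (f₀, f₁) →
          ∀ x : Fin n → ℝ, g₁ x 0 = f₁ x 0 ∧
            ∀ j : Fin n,
              g₁ x j.succ + ∑ i : Fin n, g₁ x i.succ * pdd i f₀ x j.succ = f₁ x j.succ)) ∧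
    (Function.Bijective (fun x : Fin n → ℝ => x + spat f₀ x) →
      ∀ f₁ : Dat n,
        starOp (f₀, (0 : Dat n))
            ((0 : Dat n), fun x => f₁ (Function.invFun (fun y : Fin n → ℝ => y + spat f₀ y) x))
          = (f₀, f₁) ∧
        (∀ g₁ : Dat n, starOp (f₀, (0 : Dat n)) ((0 : Dat n), g₁) = (f₀, f₁) →
          g₁ = fun x => f₁ (Function.invFun (fun y : Fin n → ℝ => y + spat f₀ y) x))) :=
  stmt18_general n f₀ hf₀0
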